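/- arXiv:math/0403217 — 2 statements merged into one kernel-verified Lean document; each statement's English description precedes it below -/
import Mathlib

section
/- Let k ≥ 1 and let ℓ > 2k be an odd integer. Then the map φ(λ) := γ − w₁(λ) maps C_ℓ into C_ℓ, satisfies φ(φ(λ)) = λ for all λ ∈ C_ℓ, and sends weights with all coordinates in ℤ to weights with all coordinates in ℤ+1/2 and vice versa; consequently φ is a fixed-point-free involution of C_ℓ, and φ(0) = γ. -/
open scoped BigOperators

noncomputable section

/-- The Weyl alcove `C_ℓ` for type `B_k`: weights `λ ∈ ℝ^k` all of whose coordinates lie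
in `ℤ` or all in `ℤ + 1/2`, weakly decreasing, nonnegative, with `2λ₁ + 2k - 1 < ℓ`. -/
def Cset (k : ℕ) (hk : 0 < k) (ℓ : ℤ) : Set (Fin k → ℝ) :=
  {lam | ((∀ i, ∃ n : ℤ, lam i = (n : ℝ)) ∨ (∀ i, ∃ n : ℤ, lam i = (n : ℝ) + 1 / 2)) ∧
    (∀ i j : Fin k, i ≤ j → lam j ≤ lam i) ∧ (∀ i, 0 ≤ lam i) ∧
    2 * lam ⟨0, hk⟩ + 2 * (k : ℝ) - 1 < (ℓ : ℝ)}

/-- `γ = ((ℓ-2k)/2, …, (ℓ-2k)/2)`. -/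
def gammaWt (k : ℕ) (ℓ : ℤ) : Fin k → ℝ := fun _ => ((ℓ : ℝ) - 2 * k) / 2

/-- The involution `φ(λ) = γ - w₁(λ)` where `w₁` is the coordinate reversal. -/
def phiMap (k : ℕ) (ℓ : ℤ) (lam : Fin k → ℝ) : Fin k → ℝ :=
  fun i => gammaWt k ℓ i - lam i.rev

/-- For `k ≥ 1` and odd `ℓ > 2k`, the map `φ(λ) = γ - w₁(λ)` maps `C_ℓ` into itself,
is an involution, interchanges integral and half-integral weights (hence is
fixed-point free), and sends `0` to `γ`. -/
theorem phi_involution_of_alcove (k : ℕ) (hk : 0 < k) (ℓ : ℤ)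
    (hodd : Odd ℓ) (hℓ : 2 * (k : ℤ) < ℓ) :
    (∀ lam ∈ Cset k hk ℓ, phiMap k ℓ lam ∈ Cset k hk ℓ) ∧
    (∀ lam ∈ Cset k hk ℓ, phiMap k ℓ (phiMap k ℓ lam) = lam) ∧
    (∀ lam ∈ Cset k hk ℓ, (∀ i, ∃ n : ℤ, lam i = (n : ℝ)) →
      ∀ i, ∃ n : ℤ, phiMap k ℓ lam i = (n : ℝ) + 1 / 2) ∧
    (∀ lam ∈ Cset k hk ℓ, (∀ i, ∃ n : ℤ, lam i = (n : ℝ) + 1 / 2) →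
      ∀ i, ∃ n : ℤ, phiMap k ℓ lam i = (n : ℝ)) ∧
    (∀ lam ∈ Cset k hk ℓ, phiMap k ℓ lam ≠ lam) ∧
    phiMap k ℓ (fun _ => (0 : ℝ)) = gammaWt k ℓ := by

  obtain ⟨t, ht⟩ := hodd
  have hγ : ((ℓ : ℝ) - 2 * k) / 2 = ((t - k : ℤ) : ℝ) + 1/2 := by
    subst ht; push_cast; ring
  -- λ₁ ≤ γ for λ ∈ C
  have hmax : ∀ lam ∈ Cset k hk ℓ, lam ⟨0, hk⟩ ≤ ((ℓ : ℝ) - 2 * k) / 2 := by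
    rintro lam ⟨hint, _, _, htop⟩
    rw [hγ]
    rcases hint with h | h
    · obtain ⟨n, hn⟩ := h ⟨0, hk⟩
      rw [hn] at htop
      have h1 : (2 * n + 2 * (k : ℤ) - 1 : ℤ) < ℓ := by exact_mod_cast htop
      have h2 : n ≤ t - k := by omega
      have : (n : ℝ) ≤ ((t - k : ℤ) : ℝ) := by exact_mod_cast h2
      rw [hn]; linarith
    · obtain ⟨n, hn⟩ := h ⟨0, hk⟩
      rw [hn] at htop
      have h1 : (2 * n + 2 * (k : ℤ) : ℤ) < ℓ := by
        have : (2 * n + 2 * (k : ℤ) : ℝ) < (ℓ : ℝ) := by push_cast; linarith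
        exact_mod_cast this
      have h2 : n ≤ t - k := by omega
      have : (n : ℝ) ≤ ((t - k : ℤ) : ℝ) := by exact_mod_cast h2
      rw [hn]; linarith
  have hmax' : ∀ lam ∈ Cset k hk ℓ, ∀ i : Fin k, lam i ≤ ((ℓ : ℝ) - 2 * k) / 2 := by
    intro lam hlam i
    have := hlam.2.1 ⟨0, hk⟩ i (Nat.zero_le _)
    exact le_trans this (hmax lam hlam)
  have key12 : ∀ lam ∈ Cset k hk ℓ, ((∀ i, ∃ n : ℤ, lam i = (n : ℝ)) →
      ∀ i, ∃ n : ℤ, phiMap k ℓ lam i = (n : ℝ) + 1 / 2) := by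
    rintro lam _ h i
    obtain ⟨n, hn⟩ := h i.rev
    exact ⟨t - k - n, by simp only [phiMap, gammaWt, hn, hγ]; push_cast; ring⟩
  have key21 : ∀ lam ∈ Cset k hk ℓ, ((∀ i, ∃ n : ℤ, lam i = (n : ℝ) + 1/2) →
      ∀ i, ∃ n : ℤ, phiMap k ℓ lam i = (n : ℝ)) := by
    rintro lam _ h i
    obtain ⟨n, hn⟩ := h i.rev
    exact ⟨t - k - n, by simp only [phiMap, gammaWt, hn, hγ]; push_cast; ring⟩
  refine ⟨?_, ?_, key12, key21, ?_, ?_⟩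
  · intro lam hlam
    obtain ⟨hint, hdec, hnn, htop⟩ := hlam
    refine ⟨?_, ?_, ?_, ?_⟩
    · rcases hint with h | h
      · exact Or.inr (key12 lam ⟨Or.inl h, hdec, hnn, htop⟩ h)
      · exact Or.inl (key21 lam ⟨Or.inr h, hdec, hnn, htop⟩ h)
    · intro i j hij
      simp only [phiMap, gammaWt]
      have : lam i.rev ≤ lam j.rev := hdec j.rev i.rev (Fin.rev_le_rev.mpr hij)
      linarith
    · intro i
      have := hmax' lam ⟨hint, hdec, hnn, htop⟩ i.rev
      simp only [phiMap, gammaWt]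
      linarith
    · simp only [phiMap, gammaWt]
      have h0 := hnn (Fin.rev ⟨0, hk⟩)
      have hl : (2 * (k : ℤ) : ℝ) < (ℓ : ℝ) := by exact_mod_cast hℓ
      push_cast at hl ⊢
      linarith
  · intro lam _
    funext i
    simp [phiMap, gammaWt, Fin.rev_rev]
  · intro lam hlam hfix
    have hint := hlam.1
    rcases hint with h | h
    · obtain ⟨n, hn⟩ := h ⟨0, hk⟩
      obtain ⟨m, hm⟩ := key12 lam hlam h ⟨0, hk⟩
      rw [hfix, hn] at hm
      have : (2 * n : ℤ) = 2 * m + 1 := by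
        have : (2 * n : ℝ) = 2 * m + 1 := by push_cast; linarith
        exact_mod_cast this
      omega
    · obtain ⟨n, hn⟩ := h ⟨0, hk⟩
      obtain ⟨m, hm⟩ := key21 lam hlam h ⟨0, hk⟩
      rw [hfix, hn] at hm
      have : (2 * n + 1 : ℤ) = 2 * m := by
        have : (2 * n + 1 : ℝ) = 2 * m := by push_cast; linarith
        exact_mod_cast this
      omega
  · funext i
    simp [phiMap]

end
end

section
/- Let k ≥ 1 and let ℓ ≥ 2k+3 be odd. Let Γ(k,ℓ) be the set of integer partitions λ with λ′₁ + λ′₂ ≤ 2k+1 and λ₁ ≤ (ℓ−2k−1)/2, where λ′_j := #{i : λ_i ≥ j} is the length of the j-th column. For λ ∈ Γ(k,ℓ), let λ̄ be the partition determined by λ̄′₁ = min(λ′₁, 2k+1−λ′₁) and λ̄′_j = λ′_j for j ≥ 2 (it has at most k parts, so it is an element of ℤ^k after padding with zeros). Define Ψ(λ) := λ̄ if |λ| = Σ_i λ_i is even, and Ψ(λ) := φ(λ̄) if |λ| is odd. Then Ψ is a bijection from Γ(k,ℓ) onto C_ℓ. -/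
open scoped BigOperators

noncomputable section

/-- An integer partition: a weakly decreasing, eventually zero sequence of naturals
(rows indexed from `0`). -/
def IsPartition (lam : ℕ → ℕ) : Prop :=
  (∀ i j : ℕ, i ≤ j → lam j ≤ lam i) ∧ ∃ N : ℕ, ∀ i, N ≤ i → lam i = 0

/-- The length `λ′_j = #{i : λ_i ≥ j}` of the `j`-th column of `λ`
(columns indexed from `1`). -/
def col (lam : ℕ → ℕ) (j : ℕ) : ℕ := Set.ncard {i : ℕ | j ≤ lam i}

/-- The number of boxes `|λ|` of the partition `λ`. -/
def psize (lam : ℕ → ℕ) : ℕ := Set.ncard {p : ℕ × ℕ | p.2 < lam p.1}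

/-- `Γ(k,ℓ)`: partitions with `λ′₁ + λ′₂ ≤ 2k+1` and `λ₁ ≤ (ℓ-2k-1)/2`. -/
def Gamma (k : ℕ) (ℓ : ℤ) : Set (ℕ → ℕ) :=
  {lam | IsPartition lam ∧ col lam 1 + col lam 2 ≤ 2 * k + 1 ∧
    (lam 0 : ℝ) ≤ ((ℓ : ℝ) - 2 * k - 1) / 2}

/-- The column lengths of `λ̄`: `λ̄′₁ = min(λ′₁, 2k+1-λ′₁)` and `λ̄′_j = λ′_j` for `j ≥ 2`. -/
def colBar (k : ℕ) (lam : ℕ → ℕ) (j : ℕ) : ℕ :=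
  if j = 1 then min (col lam 1) (2 * k + 1 - col lam 1) else col lam j

/-- The `i`-th row (indexed from `0`) of `λ̄`, recovered from its column lengths. -/
def barRow (k : ℕ) (lam : ℕ → ℕ) (i : ℕ) : ℕ :=
  Set.ncard {j : ℕ | 1 ≤ j ∧ i + 1 ≤ colBar k lam j}

/-- `λ̄` as an element of `ℝ^k` (it has at most `k` parts, padded with zeros). -/
def barVec (k : ℕ) (lam : ℕ → ℕ) : Fin k → ℝ := fun i => (barRow k lam (i : ℕ) : ℝ)

/-- `Ψ(λ) = λ̄` if `|λ|` is even, and `Ψ(λ) = φ(λ̄)` if `|λ|` is odd. -/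
def Psi (k : ℕ) (ℓ : ℤ) (lam : ℕ → ℕ) : Fin k → ℝ :=
  if Even (psize lam) then barVec k lam else phiMap k ℓ (barVec k lam)


lemma ncard_Iio (n : ℕ) : (Set.Iio n).ncard = n := by
  rw [Set.ncard_eq_toFinset_card']; simp

/-- A finite downward-closed set of naturals is an initial segment. -/
lemma lowerSet_eq_Iio (S : Set ℕ) (hS : S.Finite)
    (hlow : ∀ ⦃a b : ℕ⦄, a ≤ b → b ∈ S → a ∈ S) : S = Set.Iio S.ncard := by
  ext i
  simp only [Set.mem_Iio]
  constructor
  · intro hi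
    by_contra h
    push_neg at h
    have hsub : Set.Iic i ⊆ S := fun a ha => hlow ha hi
    have := Set.ncard_le_ncard hsub hS
    rw [show Set.Iic i = Set.Iio (i+1) by ext; simp [Nat.lt_succ_iff], ncard_Iio] at this
    omega
  · intro hi
    by_contra h
    have hsub : S ⊆ Set.Iio i := by
      intro s hs
      by_contra hsi
      simp only [Set.mem_Iio, not_lt] at hsi
      exact h (hlow hsi hs)
    have := Set.ncard_le_ncard hsub (Set.finite_Iio i)
    rw [ncard_Iio] at this
    omega

lemma mem_lowerSet_iff (S : Set ℕ) (hS : S.Finite)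
    (hlow : ∀ ⦃a b : ℕ⦄, a ≤ b → b ∈ S → a ∈ S) (i : ℕ) : i ∈ S ↔ i < S.ncard := by
  conv_lhs => rw [lowerSet_eq_Iio S hS hlow]
  rfl

-- Section 2: columns of a partition-like function
section Cols
variable {lam : ℕ → ℕ}

lemma col_finite (hmono : ∀ i j : ℕ, i ≤ j → lam j ≤ lam i) (N : ℕ)
    (hN : ∀ i, N ≤ i → lam i = 0) {j : ℕ} (hj : 1 ≤ j) :
    {i : ℕ | j ≤ lam i}.Finite := by
  apply Set.Finite.subset (Set.finite_Iio N)
  intro i hi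
  simp only [Set.mem_setOf_eq] at hi
  simp only [Set.mem_Iio]
  by_contra h
  push_neg at h
  rw [hN i h] at hi
  omega

lemma le_iff_lt_col (hmono : ∀ i j : ℕ, i ≤ j → lam j ≤ lam i) (N : ℕ)
    (hN : ∀ i, N ≤ i → lam i = 0) {j : ℕ} (hj : 1 ≤ j) (i : ℕ) :
    j ≤ lam i ↔ i < col lam j := by
  exact mem_lowerSet_iff _ (col_finite hmono N hN hj)
    (fun a b hab hb => le_trans hb (hmono a b hab)) i

lemma col_antitone (hmono : ∀ i j : ℕ, i ≤ j → lam j ≤ lam i) (N : ℕ)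
    (hN : ∀ i, N ≤ i → lam i = 0) {j j' : ℕ} (hj : 1 ≤ j) (hjj : j ≤ j') :
    col lam j' ≤ col lam j := by
  apply Set.ncard_le_ncard _ (col_finite hmono N hN hj)
  intro i hi
  exact le_trans hjj hi

lemma col_eq_zero (hmono : ∀ i j : ℕ, i ≤ j → lam j ≤ lam i) {j : ℕ} (hj : lam 0 < j) :
    col lam j = 0 := by
  have : {i : ℕ | j ≤ lam i} = ∅ := by
    ext i
    simp only [Set.mem_setOf_eq, Set.mem_empty_iff_false, iff_false, not_le]
    exact lt_of_le_of_lt (hmono 0 i (Nat.zero_le i)) hj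
  rw [col]
  rw [this, Set.ncard_empty]

end Cols

-- Section 3: recovering rows from columns
section Rows

noncomputable def rowsOf (d : ℕ → ℕ) (i : ℕ) : ℕ := Set.ncard {j : ℕ | 1 ≤ j ∧ i + 1 ≤ d j}

variable {d : ℕ → ℕ} {M : ℕ}

lemma rowsOf_congr {d' : ℕ → ℕ} (h : ∀ j, 1 ≤ j → d j = d' j) : rowsOf d = rowsOf d' := by
  funext i
  unfold rowsOf
  congr 1
  ext j
  simp only [Set.mem_setOf_eq]
  constructor
  · rintro ⟨h1, h2⟩; exact ⟨h1, by rw [← h j h1]; exact h2⟩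
  · rintro ⟨h1, h2⟩; exact ⟨h1, by rw [h j h1]; exact h2⟩

lemma rowsOf_set_eq (i : ℕ) :
    {j : ℕ | 1 ≤ j ∧ i + 1 ≤ d j} = (fun j => j + 1) '' {j : ℕ | i + 1 ≤ d (j + 1)} := by
  ext j
  simp only [Set.mem_setOf_eq, Set.mem_image]
  constructor
  · rintro ⟨h1, h2⟩
    exact ⟨j - 1, by rw [Nat.sub_add_cancel h1]; exact h2, Nat.sub_add_cancel h1⟩
  · rintro ⟨a, ha, rfl⟩
    exact ⟨Nat.le_add_left 1 a, ha⟩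

lemma rowsOf_eq_ncard_shift (i : ℕ) :
    rowsOf d i = {j : ℕ | i + 1 ≤ d (j + 1)}.ncard := by
  rw [rowsOf, rowsOf_set_eq, Set.ncard_image_of_injective _ (add_left_injective 1)]

lemma shift_finite (hM : ∀ j, M < j → d j = 0) (i : ℕ) :
    {j : ℕ | i + 1 ≤ d (j + 1)}.Finite := by
  apply Set.Finite.subset (Set.finite_Iio M)
  intro j hj
  simp only [Set.mem_setOf_eq] at hj
  simp only [Set.mem_Iio]
  by_contra h
  push_neg at h
  rw [hM (j+1) (by omega)] at hj
  omega

lemma le_rowsOf_iff (hd : ∀ j j' : ℕ, 1 ≤ j → j ≤ j' → d j' ≤ d j)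
    (hM : ∀ j, M < j → d j = 0) {j : ℕ} (hj : 1 ≤ j) (i : ℕ) :
    j ≤ rowsOf d i ↔ i + 1 ≤ d j := by
  rw [rowsOf_eq_ncard_shift]
  have key := mem_lowerSet_iff {j : ℕ | i + 1 ≤ d (j + 1)} (shift_finite hM i)
    (fun a b hab hb => le_trans hb (hd (a+1) (b+1) (by omega) (by omega))) (j - 1)
  simp only [Set.mem_setOf_eq] at key
  rw [Nat.sub_add_cancel hj] at key
  omega

lemma rowsOf_antitone (hM : ∀ j, M < j → d j = 0) {i i' : ℕ} (hii : i ≤ i') :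
    rowsOf d i' ≤ rowsOf d i := by
  rw [rowsOf_eq_ncard_shift, rowsOf_eq_ncard_shift]
  apply Set.ncard_le_ncard _ (shift_finite hM i)
  intro j hj
  simp only [Set.mem_setOf_eq] at hj ⊢
  omega

lemma rowsOf_eq_zero (hd : ∀ j j' : ℕ, 1 ≤ j → j ≤ j' → d j' ≤ d j) {i : ℕ}
    (hi : d 1 ≤ i) : rowsOf d i = 0 := by
  rw [rowsOf]
  convert Set.ncard_empty ℕ
  ext j
  simp only [Set.mem_setOf_eq, Set.mem_empty_iff_false, iff_false, not_and, not_le]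
  intro h1
  exact lt_of_le_of_lt (le_trans (hd 1 j le_rfl h1) hi) (Nat.lt_succ_self i)

lemma col_rowsOf (hd : ∀ j j' : ℕ, 1 ≤ j → j ≤ j' → d j' ≤ d j)
    (hM : ∀ j, M < j → d j = 0) {j : ℕ} (hj : 1 ≤ j) :
    col (rowsOf d) j = d j := by
  have : {i : ℕ | j ≤ rowsOf d i} = Set.Iio (d j) := by
    ext i
    simp only [Set.mem_setOf_eq, Set.mem_Iio]
    rw [le_rowsOf_iff hd hM hj i]
    omega
  rw [col, this, ncard_Iio]

lemma nat_eq_of_le_iff {a b : ℕ} (h : ∀ j, 1 ≤ j → (j ≤ a ↔ j ≤ b)) : a = b := by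
  rcases Nat.eq_zero_or_pos a with ha | ha
  · rcases Nat.eq_zero_or_pos b with hb | hb
    · omega
    · have := (h b hb).mpr le_rfl; omega
  · rcases Nat.eq_zero_or_pos b with hb | hb
    · have := (h a ha).mp le_rfl; omega
    · have h1 := (h a ha).mp le_rfl
      have h2 := (h b hb).mpr le_rfl
      omega

/-- A partition is determined by its columns. -/
lemma eq_rowsOf (hmono : ∀ i j : ℕ, i ≤ j → lam j ≤ lam i) (N : ℕ)
    (hN : ∀ i, N ≤ i → lam i = 0)
    (hd : ∀ j j' : ℕ, 1 ≤ j → j ≤ j' → d j' ≤ d j)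
    (hM : ∀ j, M < j → d j = 0)
    (hcol : ∀ j, 1 ≤ j → col lam j = d j) : lam = rowsOf d := by
  funext i
  apply nat_eq_of_le_iff
  intro j hj
  rw [le_iff_lt_col hmono N hN hj i, hcol j hj, le_rowsOf_iff hd hM hj i]
  omega

end Rows

-- Section 4: size
lemma ncard_under (f : ℕ → ℕ) (N : ℕ) (hf : ∀ i, N ≤ i → f i = 0) :
    Set.ncard {p : ℕ × ℕ | p.2 < f p.1} = ∑ i ∈ Finset.range N, f i := by
  have hset : {p : ℕ × ℕ | p.2 < f p.1} =
      ↑((Finset.range N).biUnion (fun i => {i} ×ˢ Finset.range (f i))) := by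
    ext ⟨a, b⟩
    simp only [Set.mem_setOf_eq, Finset.coe_biUnion, Finset.mem_coe, Finset.mem_range,
      Set.mem_iUnion, Finset.mem_product, Finset.mem_singleton]
    constructor
    · intro h
      refine ⟨a, ?_, rfl, h⟩
      by_contra ha
      push_neg at ha
      rw [hf a ha] at h
      omega
    · rintro ⟨i, hi, rfl, hb⟩
      exact hb
  rw [hset, Set.ncard_coe_finset]
  rw [Finset.card_biUnion]
  · apply Finset.sum_congr rfl
    intro i _
    rw [Finset.card_product, Finset.card_singleton, Finset.card_range, one_mul]
  · intro i _ j _ hij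
    simp only [Finset.disjoint_left]
    rintro ⟨a, b⟩ h1 h2
    simp only [Finset.mem_product, Finset.mem_singleton] at h1 h2
    exact hij (h1.1 ▸ h2.1 ▸ rfl)

lemma psize_eq_sum_col {lam : ℕ → ℕ} (hmono : ∀ i j : ℕ, i ≤ j → lam j ≤ lam i) (N : ℕ)
    (hN : ∀ i, N ≤ i → lam i = 0) {M : ℕ} (hM : lam 0 ≤ M) :
    psize lam = ∑ j ∈ Finset.range M, col lam (j + 1) := by
  have hswap : {p : ℕ × ℕ | p.2 < lam p.1} = Prod.swap '' {q : ℕ × ℕ | q.2 < col lam (q.1 + 1)} := by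
    ext ⟨a, b⟩
    simp only [Set.mem_setOf_eq, Set.image_swap_eq_preimage_swap, Set.mem_preimage, Prod.snd_swap,
      Prod.fst_swap]
    rw [← le_iff_lt_col hmono N hN (by omega) a]
    omega
  rw [psize, hswap, Set.ncard_image_of_injective _ Prod.swap_injective]
  apply ncard_under (fun j => col lam (j+1)) M
  intro j hj
  apply col_eq_zero hmono
  omega

lemma rowsOf_le {d : ℕ → ℕ} {M : ℕ} (hM : ∀ j, M < j → d j = 0) (i : ℕ) :
    rowsOf d i ≤ M := by
  rw [rowsOf_eq_ncard_shift]
  have h := Set.ncard_le_ncard (show {j : ℕ | i + 1 ≤ d (j + 1)} ⊆ Set.Iio M by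
    intro j hj
    simp only [Set.mem_setOf_eq] at hj
    simp only [Set.mem_Iio]
    by_contra h
    rw [hM (j + 1) (by omega)] at hj
    omega) (Set.finite_Iio M)
  rw [ncard_Iio] at h
  exact h
section LamSide
variable {k : ℕ} {lam : ℕ → ℕ}

lemma colBar_antitone (hpart : IsPartition lam) (hc : col lam 1 + col lam 2 ≤ 2 * k + 1) :
    ∀ j j' : ℕ, 1 ≤ j → j ≤ j' → colBar k lam j' ≤ colBar k lam j := by
  obtain ⟨hmono, N, hN⟩ := hpart
  have hca : ∀ a b : ℕ, 1 ≤ a → a ≤ b → col lam b ≤ col lam a :=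
    fun a b ha hab => col_antitone hmono N hN ha hab
  intro j j' hj hjj
  unfold colBar
  by_cases h1 : j = 1
  · subst h1
    by_cases h2 : j' = 1
    · subst h2; simp
    · rw [if_neg h2, if_pos rfl]
      have h3 : col lam j' ≤ col lam 2 := hca 2 j' (by omega) (by omega)
      have h4 : col lam 2 ≤ col lam 1 := hca 1 2 (by omega) (by omega)
      exact le_min (by omega) (by omega)
  · rw [if_neg h1]
    have h2 : j' ≠ 1 := by omega
    rw [if_neg h2]
    exact hca j j' hj hjj

lemma colBar_le_k (hpart : IsPartition lam) (hc : col lam 1 + col lam 2 ≤ 2 * k + 1) :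
    ∀ j : ℕ, 1 ≤ j → colBar k lam j ≤ k := by
  obtain ⟨hmono, N, hN⟩ := hpart
  intro j hj
  unfold colBar
  by_cases h1 : j = 1
  · rw [if_pos h1]
    have h2 := min_le_left (col lam 1) (2 * k + 1 - col lam 1)
    have h3 := min_le_right (col lam 1) (2 * k + 1 - col lam 1)
    omega
  · rw [if_neg h1]
    have h3 : col lam j ≤ col lam 2 := col_antitone hmono N hN (by omega) (by omega)
    have h4 : col lam 2 ≤ col lam 1 := col_antitone hmono N hN (by omega) (by omega)
    omega

lemma colBar_eq_zero (hpart : IsPartition lam) :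
    ∀ j : ℕ, max (lam 0) 1 < j → colBar k lam j = 0 := by
  intro j hj
  unfold colBar
  rw [if_neg (by omega)]
  exact col_eq_zero hpart.1 (by omega)

lemma barRow_eq_rowsOf : barRow k lam = rowsOf (colBar k lam) := rfl

lemma barRow_antitone (hpart : IsPartition lam) :
    ∀ i i' : ℕ, i ≤ i' → barRow k lam i' ≤ barRow k lam i := by
  intro i i' h
  rw [barRow_eq_rowsOf]
  exact rowsOf_antitone (colBar_eq_zero hpart) h

lemma barRow_eq_zero (hpart : IsPartition lam) (hc : col lam 1 + col lam 2 ≤ 2 * k + 1) :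
    ∀ i : ℕ, k ≤ i → barRow k lam i = 0 := by
  intro i hi
  rw [barRow_eq_rowsOf]
  exact rowsOf_eq_zero (colBar_antitone hpart hc)
    (le_trans (colBar_le_k hpart hc 1 le_rfl) hi)

lemma col_barRow (hpart : IsPartition lam) (hc : col lam 1 + col lam 2 ≤ 2 * k + 1) :
    ∀ j : ℕ, 1 ≤ j → col (barRow k lam) j = colBar k lam j := by
  intro j hj
  rw [barRow_eq_rowsOf]
  exact col_rowsOf (colBar_antitone hpart hc) (colBar_eq_zero hpart) hj

lemma barRow_le (hpart : IsPartition lam) :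
    ∀ i : ℕ, barRow k lam i ≤ max (lam 0) 1 := by
  intro i
  rw [barRow_eq_rowsOf]
  exact rowsOf_le (colBar_eq_zero hpart) i

/-- The key size relation: `|λ| + d₁ = |λ̄| + c₁`. -/
lemma psize_rel (hpart : IsPartition lam) (hc : col lam 1 + col lam 2 ≤ 2 * k + 1) :
    psize lam + colBar k lam 1 = psize (barRow k lam) + col lam 1 := by
  obtain ⟨hmono, N, hN⟩ := hpart
  set M := max (lam 0) 1 with hM
  obtain ⟨M', hM'⟩ : ∃ M', M = M' + 1 := ⟨M - 1, by omega⟩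
  have h1 : psize lam = ∑ j ∈ Finset.range M, col lam (j + 1) :=
    psize_eq_sum_col hmono N hN (by omega)
  have h2 : psize (barRow k lam) = ∑ j ∈ Finset.range M, col (barRow k lam) (j + 1) :=
    psize_eq_sum_col (barRow_antitone ⟨hmono, N, hN⟩) k (barRow_eq_zero ⟨hmono, N, hN⟩ hc)
      (le_trans (barRow_le ⟨hmono, N, hN⟩ 0) le_rfl)
  rw [hM'] at h1 h2
  rw [Finset.sum_range_succ'] at h1 h2
  simp only [zero_add] at h1 h2
  have h3 : ∀ j ∈ Finset.range M', col (barRow k lam) (j + 1 + 1) = col lam (j + 1 + 1) := by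
    intro j _
    rw [col_barRow ⟨hmono, N, hN⟩ hc (j + 1 + 1) (by omega)]
    unfold colBar
    rw [if_neg (by omega)]
  rw [Finset.sum_congr rfl h3] at h2
  have h4 : col (barRow k lam) (0 + 1) = colBar k lam 1 :=
    col_barRow ⟨hmono, N, hN⟩ hc 1 le_rfl
  rw [h4] at h2
  omega

end LamSide
/-- The condition distinguishing the two cases: all coordinates are integers. -/
def isIntCase (k : ℕ) (x : Fin k → ℝ) : Prop := ∀ i, ∃ n : ℤ, x i = (n : ℝ)

open scoped Classical in
/-- `y = x` in the integer case, `y = φ(x)` otherwise. -/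
def yOf (k : ℕ) (ℓ : ℤ) (x : Fin k → ℝ) : Fin k → ℝ :=
  if isIntCase k x then x else phiMap k ℓ x

/-- The candidate `λ̄`, as a sequence of naturals. -/
def muOf (k : ℕ) (ℓ : ℤ) (x : Fin k → ℝ) : ℕ → ℕ :=
  fun i => if h : i < k then (⌊yOf k ℓ x ⟨i, h⟩⌋).toNat else 0

open scoped Classical in
/-- The columns of the preimage partition. -/
def cOf (k : ℕ) (ℓ : ℤ) (x : Fin k → ℝ) : ℕ → ℕ := fun j =>
  if j = 1 then
    (if (Even (psize (muOf k ℓ x)) ↔ isIntCase k x) then col (muOf k ℓ x) 1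
     else 2 * k + 1 - col (muOf k ℓ x) 1)
  else col (muOf k ℓ x) j

/-- The inverse of `Ψ`. -/
def invPsi (k : ℕ) (ℓ : ℤ) (x : Fin k → ℝ) : ℕ → ℕ := rowsOf (cOf k ℓ x)

lemma phiMap_involutive (k : ℕ) (ℓ : ℤ) (x : Fin k → ℝ) :
    phiMap k ℓ (phiMap k ℓ x) = x := by
  funext i
  unfold phiMap gammaWt
  rw [Fin.rev_rev]
  ring

lemma half_ne_int (n n' : ℤ) : (n : ℝ) + 1 / 2 ≠ (n' : ℝ) := by
  intro h
  have h2 : (2 * n + 1 : ℤ) = (2 * n' : ℤ) := by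
    have : (2 * (n : ℝ) + 1) = 2 * (n' : ℝ) := by linarith
    exact_mod_cast this
  omega
lemma lamSide {k : ℕ} (hk : 0 < k) {ℓ : ℤ} {m : ℕ} (hm : 1 ≤ m)
    (hl : ℓ = 2 * m + 2 * k + 1) {lam : ℕ → ℕ} (hlam : lam ∈ Gamma k ℓ) :
    Psi k ℓ lam ∈ Cset k hk ℓ ∧ invPsi k ℓ (Psi k ℓ lam) = lam := by
  obtain ⟨hpart, hc, htop⟩ := hlam
  have hlR : (ℓ : ℝ) = 2 * m + 2 * k + 1 := by rw [hl]; push_cast; ring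
  have hlam0 : lam 0 ≤ m := by
    have h2 : ((lam 0 : ℕ) : ℝ) ≤ (m : ℝ) := by
      rw [hlR] at htop; push_cast at htop ⊢; linarith
    exact_mod_cast h2
  have hBle : ∀ i, barRow k lam i ≤ m := fun i =>
    le_trans (barRow_le hpart i) (by omega)
  have hγ : ∀ i : Fin k, gammaWt k ℓ i = (m : ℝ) + 1 / 2 := by
    intro i; unfold gammaWt; rw [hlR]; push_cast; ring
  have hBcast : ∀ i : ℕ, ((barRow k lam i : ℕ) : ℝ) ≤ (m : ℝ) :=
    fun i => Nat.cast_le.mpr (hBle i)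
  -- membership in Cset
  have hmem : Psi k ℓ lam ∈ Cset k hk ℓ := by
    by_cases hev : Even (psize lam)
    · have hPsi : Psi k ℓ lam = barVec k lam := by unfold Psi; rw [if_pos hev]
      rw [hPsi]
      refine ⟨Or.inl fun i => ⟨(barRow k lam i : ℤ), by simp [barVec]⟩, ?_, ?_, ?_⟩
      · intro i j hij
        exact Nat.cast_le.mpr (barRow_antitone hpart _ _ hij)
      · intro i; exact Nat.cast_nonneg _
      · show 2 * ((barRow k lam 0 : ℕ) : ℝ) + 2 * (k : ℝ) - 1 < (ℓ : ℝ)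
        have := hBcast 0
        rw [hlR]; push_cast; linarith
    · have hPsi : Psi k ℓ lam = phiMap k ℓ (barVec k lam) := by unfold Psi; rw [if_neg hev]
      rw [hPsi]
      refine ⟨Or.inr fun i => ⟨(m : ℤ) - (barRow k lam i.rev : ℤ), ?_⟩, ?_, ?_, ?_⟩
      · show gammaWt k ℓ i - barVec k lam i.rev = _
        rw [hγ i]; unfold barVec; push_cast; ring
      · intro i j hij
        have h1 : j.rev ≤ i.rev := Fin.rev_le_rev.mpr hij
        have h2 : barRow k lam i.rev ≤ barRow k lam j.rev :=
          barRow_antitone hpart _ _ h1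
        show gammaWt k ℓ j - barVec k lam j.rev ≤ gammaWt k ℓ i - barVec k lam i.rev
        rw [hγ i, hγ j]
        unfold barVec
        have := (Nat.cast_le (α := ℝ)).mpr h2
        linarith
      · intro i
        show 0 ≤ gammaWt k ℓ i - barVec k lam i.rev
        rw [hγ i]; unfold barVec
        have := hBcast i.rev
        linarith
      · show 2 * (gammaWt k ℓ ⟨0, hk⟩ - barVec k lam (Fin.rev ⟨0, hk⟩)) + 2 * (k : ℝ) - 1 < (ℓ : ℝ)
        rw [hγ]; unfold barVec
        have : (0 : ℝ) ≤ ((barRow k lam (Fin.rev ⟨0, hk⟩ : Fin k) : ℕ) : ℝ) := Nat.cast_nonneg _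
        rw [hlR]; push_cast; linarith
  refine ⟨hmem, ?_⟩
  -- the inverse computation
  set x := Psi k ℓ lam with hx
  have hP : isIntCase k x ↔ Even (psize lam) := by
    by_cases hev : Even (psize lam)
    · refine iff_of_true ?_ hev
      intro i
      refine ⟨(barRow k lam i : ℤ), ?_⟩
      show Psi k ℓ lam i = _
      unfold Psi; rw [if_pos hev]; simp [barVec]
    · refine iff_of_false ?_ hev
      intro hint
      obtain ⟨n, hn⟩ := hint ⟨0, hk⟩
      have hval : x ⟨0, hk⟩ = ((m : ℤ) - (barRow k lam (Fin.rev ⟨0, hk⟩ : Fin k) : ℤ) : ℝ) + 1 / 2 := by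
        show Psi k ℓ lam ⟨0, hk⟩ = _
        unfold Psi; rw [if_neg hev]
        show gammaWt k ℓ ⟨0, hk⟩ - barVec k lam (Fin.rev ⟨0, hk⟩) = _
        rw [hγ]; unfold barVec; push_cast; ring
      rw [hval] at hn
      exact half_ne_int ((m : ℤ) - (barRow k lam (Fin.rev ⟨0, hk⟩ : Fin k) : ℤ)) n
        (by push_cast at hn ⊢; linarith)
  have hy : yOf k ℓ x = barVec k lam := by
    unfold yOf
    by_cases hev : Even (psize lam)
    · rw [if_pos (hP.mpr hev)]
      show Psi k ℓ lam = _
      unfold Psi; rw [if_pos hev]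
    · rw [if_neg (fun h => hev (hP.mp h))]
      have : x = phiMap k ℓ (barVec k lam) := by
        show Psi k ℓ lam = _; unfold Psi; rw [if_neg hev]
      rw [this, phiMap_involutive]
  have hmu : muOf k ℓ x = barRow k lam := by
    funext i
    unfold muOf
    by_cases h : i < k
    · rw [dif_pos h, hy]
      show (⌊((barRow k lam i : ℕ) : ℝ)⌋).toNat = _
      simp
    · rw [dif_neg h]
      exact (barRow_eq_zero hpart hc i (by omega)).symm
  have hT : psize lam + colBar k lam 1 = psize (muOf k ℓ x) + col lam 1 := by
    rw [hmu]; exact psize_rel hpart hc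
  have hd1 : col (muOf k ℓ x) 1 = colBar k lam 1 := by
    rw [hmu]; exact col_barRow hpart hc 1 le_rfl
  have ha : col lam 1 ≤ 2 * k + 1 := by omega
  have hmin : colBar k lam 1 = min (col lam 1) (2 * k + 1 - col lam 1) := by
    unfold colBar; rw [if_pos rfl]
  have hcOf : ∀ j, 1 ≤ j → cOf k ℓ x j = col lam j := by
    intro j hj
    unfold cOf
    by_cases h1 : j = 1
    · subst h1
      rw [if_pos rfl]
      by_cases hcase : col lam 1 ≤ 2 * k + 1 - col lam 1
      · have heq : colBar k lam 1 = col lam 1 := by rw [hmin]; exact min_eq_left hcase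
        have hTT : psize (muOf k ℓ x) = psize lam := by omega
        rw [if_pos (by rw [hTT]; exact hP.symm)]
        omega
      · have heq : colBar k lam 1 = 2 * k + 1 - col lam 1 := by
          rw [hmin]; exact min_eq_right (by omega)
        have hpar : Even (psize (muOf k ℓ x)) ↔ ¬ Even (psize lam) := by
          rw [Nat.even_iff, Nat.even_iff]
          omega
        rw [if_neg (by rw [hpar, hP]; tauto)]
        omega
    · rw [if_neg h1, hmu, col_barRow hpart hc j hj]
      unfold colBar; rw [if_neg h1]
  obtain ⟨hmono, N, hN⟩ := hpart
  have hlameq : lam = rowsOf (col lam) := by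
    refine eq_rowsOf hmono N hN (fun a b hab h => col_antitone hmono N hN hab h)
      (M := max (lam 0) 1) (fun j hj => col_eq_zero hmono (by omega)) (fun j hj => rfl)
  rw [invPsi, rowsOf_congr hcOf]
  exact hlameq.symm
lemma xSide {k : ℕ} (hk : 0 < k) {ℓ : ℤ} {m : ℕ} (hm : 1 ≤ m)
    (hl : ℓ = 2 * m + 2 * k + 1) {x : Fin k → ℝ} (hx : x ∈ Cset k hk ℓ) :
    invPsi k ℓ x ∈ Gamma k ℓ ∧ Psi k ℓ (invPsi k ℓ x) = x := by
  obtain ⟨hdisj, hmono, hpos, htopx⟩ := hx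
  have hlR : (ℓ : ℝ) = 2 * m + 2 * k + 1 := by rw [hl]; push_cast; ring
  have hγ : ∀ i : Fin k, gammaWt k ℓ i = (m : ℝ) + 1 / 2 := by
    intro i; unfold gammaWt; rw [hlR]; push_cast; ring
  have hx0 : ∀ i, x i ≤ x ⟨0, hk⟩ := fun i => hmono ⟨0, hk⟩ i (Fin.mk_le_of_le_val (Nat.zero_le _))
  have htop' : x ⟨0, hk⟩ < (m : ℝ) + 1 := by rw [hlR] at htopx; push_cast at htopx; linarith
  -- the y function: integral values in [0, m], weakly decreasing
  have yspec : ∀ i : Fin k, ∃ n : ℕ, yOf k ℓ x i = (n : ℝ) ∧ n ≤ m := by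
    intro i
    by_cases hInt : isIntCase k x
    · obtain ⟨n, hn⟩ := hInt i
      have hn0 : (0 : ℤ) ≤ n := by exact_mod_cast hn ▸ hpos i
      have hnm : n < (m : ℤ) + 1 := by
        have : (n : ℝ) < (m : ℝ) + 1 := by rw [← hn]; exact lt_of_le_of_lt (hx0 i) htop'
        exact_mod_cast this
      refine ⟨n.toNat, ?_, by omega⟩
      rw [yOf, if_pos hInt, hn]
      have h2 : (n.toNat : ℤ) = n := Int.toNat_of_nonneg hn0
      exact_mod_cast h2.symm
    · have hhalf := hdisj.resolve_left hInt
      obtain ⟨n, hn⟩ := hhalf i.rev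
      have hn0 : (0 : ℤ) ≤ n := by
        have h1 : (-1 : ℝ) < (n : ℝ) := by have := hpos i.rev; rw [hn] at this; linarith
        have : (-1 : ℤ) < n := by exact_mod_cast h1
        omega
      have hnm : n < (m : ℤ) + 1 := by
        have h1 : (n : ℝ) < (m : ℝ) + 1 := by
          have := lt_of_le_of_lt (hx0 i.rev) htop'
          rw [hn] at this; linarith
        exact_mod_cast h1
      refine ⟨m - n.toNat, ?_, by omega⟩
      rw [yOf, if_neg hInt]
      show gammaWt k ℓ i - x i.rev = _
      rw [hγ i, hn]
      have h3 : (n.toNat : ℤ) = n := Int.toNat_of_nonneg hn0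
      have : ((m - n.toNat : ℕ) : ℝ) = (m : ℝ) - (n : ℝ) := by
        push_cast [Nat.cast_sub (by omega : n.toNat ≤ m)]
        have h4 : ((n.toNat : ℕ) : ℝ) = ((n : ℤ) : ℝ) := by exact_mod_cast h3
        rw [h4]
      rw [this]; ring
  have ymono : ∀ i j : Fin k, i ≤ j → yOf k ℓ x j ≤ yOf k ℓ x i := by
    intro i j hij
    by_cases hInt : isIntCase k x
    · rw [yOf, if_pos hInt]; exact hmono i j hij
    · rw [yOf, if_neg hInt]
      show gammaWt k ℓ j - x j.rev ≤ gammaWt k ℓ i - x i.rev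
      rw [hγ i, hγ j]
      have := hmono j.rev i.rev (Fin.rev_le_rev.mpr hij)
      linarith
  -- facts about μ
  set μ := muOf k ℓ x with hμdef
  have hμ : ∀ (i : ℕ) (h : i < k), (μ i : ℝ) = yOf k ℓ x ⟨i, h⟩ ∧ μ i ≤ m := by
    intro i h
    obtain ⟨n, hn, hnm⟩ := yspec ⟨i, h⟩
    have : μ i = n := by
      rw [hμdef]; unfold muOf; rw [dif_pos h, hn]; simp
    rw [this, hn]; exact ⟨rfl, hnm⟩
  have hμ0 : ∀ i, k ≤ i → μ i = 0 := by
    intro i hi; rw [hμdef]; unfold muOf; rw [dif_neg (by omega)]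
  have hμmono : ∀ i j : ℕ, i ≤ j → μ j ≤ μ i := by
    intro i j hij
    by_cases hj : j < k
    · have hi : i < k := by omega
      obtain ⟨h1, _⟩ := hμ i hi
      obtain ⟨h2, _⟩ := hμ j hj
      have := ymono ⟨i, hi⟩ ⟨j, hj⟩ hij
      rw [← h1, ← h2] at this
      exact_mod_cast this
    · rw [hμ0 j (by omega)]; omega
  have hμle : ∀ i, μ i ≤ m := by
    intro i
    by_cases h : i < k
    · exact (hμ i h).2
    · rw [hμ0 i (by omega)]; omega
  have hμpart : IsPartition μ := ⟨hμmono, k, hμ0⟩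
  have hd_anti : ∀ a b : ℕ, 1 ≤ a → a ≤ b → col μ b ≤ col μ a :=
    fun a b ha hab => col_antitone hμmono k hμ0 ha hab
  have hd1k : col μ 1 ≤ k := by
    have hsub : {i : ℕ | 1 ≤ μ i} ⊆ Set.Iio k := by
      intro i hi
      simp only [Set.mem_setOf_eq] at hi
      simp only [Set.mem_Iio]
      by_contra h
      rw [hμ0 i (by omega)] at hi
      omega
    have := Set.ncard_le_ncard hsub (Set.finite_Iio k)
    rw [ncard_Iio] at this
    exact this
  have hdM : ∀ j, max (μ 0) 1 < j → col μ j = 0 :=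
    fun j hj => col_eq_zero hμmono (by omega)
  -- facts about the chosen columns c
  have hc1 : cOf k ℓ x 1 = col μ 1 ∨ cOf k ℓ x 1 = 2 * k + 1 - col μ 1 := by
    unfold cOf
    rw [if_pos rfl]
    split_ifs with h
    · exact Or.inl rfl
    · exact Or.inr rfl
  have hc2 : ∀ j, 2 ≤ j → cOf k ℓ x j = col μ j := by
    intro j hj; unfold cOf; rw [if_neg (by omega)]
  have hc1le : cOf k ℓ x 1 ≤ 2 * k + 1 := by rcases hc1 with h | h <;> omega
  have hc1ge : col μ 1 ≤ cOf k ℓ x 1 := by rcases hc1 with h | h <;> omega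
  have hc1d : min (cOf k ℓ x 1) (2 * k + 1 - cOf k ℓ x 1) = col μ 1 := by
    rcases hc1 with h | h
    · rw [h]; exact min_eq_left (by omega)
    · rw [h]
      have h2 : 2 * k + 1 - (2 * k + 1 - col μ 1) = col μ 1 := by omega
      rw [h2]; exact min_eq_right (by omega)
  have hcmono : ∀ j j' : ℕ, 1 ≤ j → j ≤ j' → cOf k ℓ x j' ≤ cOf k ℓ x j := by
    intro j j' hj hjj
    by_cases h1 : j = 1
    · subst h1
      by_cases h2 : j' = 1
      · subst h2; omega
      · rw [hc2 j' (by omega)]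
        have := hd_anti 1 j' le_rfl (by omega)
        omega
    · rw [hc2 j (by omega), hc2 j' (by omega)]
      exact hd_anti j j' (by omega) hjj
  have hcM : ∀ j, max (μ 0) 1 < j → cOf k ℓ x j = 0 := by
    intro j hj
    rw [hc2 j (by omega)]
    exact hdM j hj
  -- the preimage partition
  set lam := invPsi k ℓ x with hlamdef
  have hlam_eq : lam = rowsOf (cOf k ℓ x) := rfl
  have hLammono : ∀ i i' : ℕ, i ≤ i' → lam i' ≤ lam i := by
    intro i i' h; rw [hlam_eq]; exact rowsOf_antitone hcM h
  have hLamzero : ∀ i, 2 * k + 1 ≤ i → lam i = 0 := by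
    intro i hi; rw [hlam_eq]
    exact rowsOf_eq_zero hcmono (by omega)
  have hLampart : IsPartition lam := ⟨hLammono, 2 * k + 1, hLamzero⟩
  have hcolLam : ∀ j, 1 ≤ j → col lam j = cOf k ℓ x j := by
    intro j hj; rw [hlam_eq]; exact col_rowsOf hcmono hcM hj
  have hLam0 : lam 0 ≤ m := by
    rw [hlam_eq]
    have := hμle 0
    exact le_trans (rowsOf_le hcM 0) (by omega)
  have hΓ : lam ∈ Gamma k ℓ := by
    refine ⟨hLampart, ?_, ?_⟩
    · rw [hcolLam 1 (by omega), hcolLam 2 (by omega), hc2 2 le_rfl]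
      have h1 := hd_anti 1 2 le_rfl (by omega)
      rcases hc1 with h | h <;> omega
    · rw [hlR]
      have : ((lam 0 : ℕ) : ℝ) ≤ (m : ℝ) := Nat.cast_le.mpr hLam0
      push_cast
      linarith
  refine ⟨hΓ, ?_⟩
  -- size relation between lam and μ
  have hsize : psize lam + col μ 1 = psize μ + cOf k ℓ x 1 := by
    set M := max (μ 0) 1 with hM
    obtain ⟨M', hM'⟩ : ∃ M', M = M' + 1 := ⟨M - 1, by omega⟩
    have h1 : psize lam = ∑ j ∈ Finset.range M, col lam (j + 1) :=
      psize_eq_sum_col hLammono (2 * k + 1) hLamzero (by rw [hlam_eq]; exact rowsOf_le hcM 0)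
    have h2 : psize μ = ∑ j ∈ Finset.range M, col μ (j + 1) :=
      psize_eq_sum_col hμmono k hμ0 (by omega)
    rw [hM'] at h1 h2
    rw [Finset.sum_range_succ'] at h1 h2
    simp only [zero_add] at h1 h2
    have h3 : ∀ j ∈ Finset.range M', col lam (j + 1 + 1) = col μ (j + 1 + 1) := by
      intro j _
      rw [hcolLam (j + 1 + 1) (by omega), hc2 (j + 1 + 1) (by omega)]
    rw [Finset.sum_congr rfl h3] at h1
    rw [hcolLam 1 (by omega)] at h1
    omega
  have hparity : Even (psize lam) ↔ isIntCase k x := by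
    by_cases hcond : Even (psize μ) ↔ isIntCase k x
    · have hceq : cOf k ℓ x 1 = col μ 1 := by
        unfold cOf; rw [if_pos rfl, if_pos hcond]
      have : psize lam = psize μ := by omega
      rw [this]; exact hcond
    · have hceq : cOf k ℓ x 1 = 2 * k + 1 - col μ 1 := by
        unfold cOf; rw [if_pos rfl, if_neg hcond]
      have hio : Even (psize lam) ↔ ¬ Even (psize μ) := by
        rw [Nat.even_iff, Nat.even_iff]
        have := hd1k
        omega
      rw [hio]
      tauto
  -- computing barRow of lam
  have hcolBar : ∀ j, 1 ≤ j → colBar k lam j = col μ j := by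
    intro j hj
    by_cases h1 : j = 1
    · subst h1
      unfold colBar
      rw [if_pos rfl, hcolLam 1 (by omega)]
      exact hc1d
    · unfold colBar
      rw [if_neg h1, hcolLam j hj, hc2 j (by omega)]
  have hbar : barRow k lam = μ := by
    rw [barRow_eq_rowsOf, rowsOf_congr hcolBar]
    exact (eq_rowsOf hμmono k hμ0 hd_anti hdM (fun j hj => rfl)).symm
  have hbarVec : barVec k lam = yOf k ℓ x := by
    funext i
    unfold barVec
    rw [hbar]
    exact (hμ (i : ℕ) i.isLt).1.trans (by congr 1)
  -- conclusion
  by_cases hInt : isIntCase k x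
  · have hev : Even (psize lam) := hparity.mpr hInt
    show Psi k ℓ lam = x
    unfold Psi
    rw [if_pos hev, hbarVec, yOf, if_pos hInt]
  · have hev : ¬ Even (psize lam) := fun h => hInt (hparity.mp h)
    show Psi k ℓ lam = x
    unfold Psi
    rw [if_neg hev, hbarVec, yOf, if_neg hInt, phiMap_involutive]
/-- For `k ≥ 1` and odd `ℓ ≥ 2k+3`, the map `Ψ` is a bijection from `Γ(k,ℓ)`
onto the Weyl alcove `C_ℓ`. -/
theorem Psi_bijOn (k : ℕ) (hk : 0 < k) (ℓ : ℤ) (hodd : Odd ℓ)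
    (hℓ : 2 * (k : ℤ) + 3 ≤ ℓ) :
    Set.BijOn (Psi k ℓ) (Gamma k ℓ) (Cset k hk ℓ) := by
  obtain ⟨m, hm, hl⟩ : ∃ m : ℕ, 1 ≤ m ∧ ℓ = 2 * (m : ℤ) + 2 * k + 1 := by
    obtain ⟨t, ht⟩ := hodd
    refine ⟨(t - k).toNat, by omega, by omega⟩
  exact Set.InvOn.bijOn
    ⟨fun lam hlam => (lamSide hk hm hl hlam).2, fun x hxx => (xSide hk hm hl hxx).2⟩
    (fun lam hlam => (lamSide hk hm hl hlam).1)
    (fun x hxx => (xSide hk hm hl hxx).1)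

end
end
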